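/- Let f be a C¹ slice function on an axially symmetric open subset Ω of a hypercomplex subspace M of dimension m+1 (associative case). Then f is slice-regular if and only if ∂̄_B f = ((1-m)/2) f'_s on Ω \ ℝ. -/

import Mathlib

/-!
Write the slice function as `f = F₁ ∘ ζ + Im(x) · (F₂ / Im) ∘ ζ`. For a composite `G ∘ ζ` the
chain rule gives `∂₀ = ∂_α` and `∂ᵢ = (xᵢ / β) ∂_β` (`i ≥ 1`); with the product rule, `vᵢ² = -1`
and `Im(x)² = -β²` this yields `∂̄_B f = I(∂F/∂z̄) + ((1 - m) / 2) f'ₛ`. It remains to see that a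
slice function vanishing off the real axis has zero stem. Evaluating it on the two slices through
the anticommuting units `v₁, v₂` (this is where `m ≥ 2` enters) shows that the stem vanishes on
the upper half-plane; the conjugation symmetry of `(F₁, F₂)` carries this to
the lower half-plane, and continuity of the first derivatives to the real axis.
-/

noncomputable section
namespace PaperStmt

variable {A : Type*} [NormedRing A] [NormedAlgebra ℝ A] {m : ℕ}

/-- Partial derivative in the `i`-th coordinate direction. -/
def pd (i : Fin (m + 1)) (f : (Fin (m + 1) → ℝ) → A) : (Fin (m + 1) → ℝ) → A :=
  fun x => fderiv ℝ f x (Pi.single i 1)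

/-- The Cauchy–Riemann operator `∂̄_B = (1/2)(∂₀ + ∑ᵢ vᵢ ∂ᵢ)` induced by the
basis `B = (1, v₁, …, v_m)` (so `v 0 = 1`). -/
def dbar (v : Fin (m + 1) → A) (f : (Fin (m + 1) → ℝ) → A) : (Fin (m + 1) → ℝ) → A :=
  fun x => (2 : ℝ)⁻¹ •
    (pd 0 f x + ∑ i ∈ Finset.univ.erase (0 : Fin (m + 1)), v i * pd i f x)

/-- The conjugated Cauchy–Riemann operator `∂_B = (1/2)(∂₀ - ∑ᵢ vᵢ ∂ᵢ)`. -/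
def dconj (v : Fin (m + 1) → A) (f : (Fin (m + 1) → ℝ) → A) : (Fin (m + 1) → ℝ) → A :=
  fun x => (2 : ℝ)⁻¹ •
    (pd 0 f x - ∑ i ∈ Finset.univ.erase (0 : Fin (m + 1)), v i * pd i f x)

/-- The Laplacian `Δ_B = ∑ᵢ ∂ᵢ²` of `M ≅ ℝ^{m+1}`. -/
def lap (f : (Fin (m + 1) → ℝ) → A) : (Fin (m + 1) → ℝ) → A :=
  fun x => ∑ i : Fin (m + 1), pd i (pd i f) x

/-- The norm `β = ‖Im x‖` of the imaginary part of the point with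
coordinates `x`. -/
def nIm (x : Fin (m + 1) → ℝ) : ℝ :=
  Real.sqrt (∑ i ∈ Finset.univ.erase (0 : Fin (m + 1)), (x i) ^ 2)

/-- The point `α + iβ` of the complex half-plane corresponding to `x`. -/
def zeta (x : Fin (m + 1) → ℝ) : ℂ := ⟨x 0, nIm x⟩

/-- The imaginary part `Im(x) = ∑_{i=1}^m xᵢ vᵢ` of the point of `M` with
coordinates `x`. -/
def imv (v : Fin (m + 1) → A) (x : Fin (m + 1) → ℝ) : A :=
  ∑ i ∈ Finset.univ.erase (0 : Fin (m + 1)), x i • v i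

/-- The point of `M` with coordinates `x` w.r.t. the basis `(1, v₁, …, v_m)`. -/
def iot (v : Fin (m + 1) → A) (x : Fin (m + 1) → ℝ) : A :=
  ∑ i : Fin (m + 1), x i • v i

/-- The slice function `I(F₁ + √-1 F₂)` induced on (the coordinates of) `M` by
the stem function with components `F₁, F₂`:
`f(α + Jβ) = F₁(α+iβ) + J F₂(α+iβ)` with `β = ‖Im x‖ ≥ 0`, `J = Im(x)/β`. -/
def sfun (v : Fin (m + 1) → A) (F₁ F₂ : ℂ → A) : (Fin (m + 1) → ℝ) → A :=
  fun x => F₁ (zeta x) + imv v x * ((nIm x)⁻¹ • F₂ (zeta x))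

/-- The spherical derivative `f'ₛ(x) = β⁻¹ F₂(α+iβ)` of the slice function
induced by the stem components `(F₁, F₂)`. -/
def sder (F₂ : ℂ → A) : (Fin (m + 1) → ℝ) → A :=
  fun x => (nIm x)⁻¹ • F₂ (zeta x)

/-- Real partial derivative of a stem component along `1 ∈ ℂ`. -/
def d1 (F : ℂ → A) (z : ℂ) : A := fderiv ℝ F z 1

/-- Real partial derivative of a stem component along `i ∈ ℂ`. -/
def dI (F : ℂ → A) (z : ℂ) : A := fderiv ℝ F z Complex.I

/-- The tangential operator `L_{ij} = xᵢ ∂ⱼ - xⱼ ∂ᵢ`. -/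
def Lop (i j : Fin (m + 1)) (f : (Fin (m + 1) → ℝ) → A) : (Fin (m + 1) → ℝ) → A :=
  fun x => x i • pd j f x - x j • pd i f x

/-- The spherical Dirac operator `Γ_B = -(1/2) ∑_{i,j=1}^m vᵢ (vⱼ L_{ij})`. -/
def Gam (v : Fin (m + 1) → A) (f : (Fin (m + 1) → ℝ) → A) : (Fin (m + 1) → ℝ) → A :=
  fun x => -((2 : ℝ)⁻¹ •
    ∑ i ∈ Finset.univ.erase (0 : Fin (m + 1)),
      ∑ j ∈ Finset.univ.erase (0 : Fin (m + 1)), v i * (v j * Lop i j f x))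


open Finset
open ContinuousLinearMap (proj smulRight_apply comp_apply)

section Coordinates

variable (x : Fin (m + 1) → ℝ)

lemma sq_nIm : nIm x ^ 2 = ∑ i ∈ univ.erase 0, x i ^ 2 :=
  Real.sq_sqrt (sum_nonneg fun i _ => sq_nonneg (x i))

lemma hasFDerivAt_nIm (hx : nIm x ≠ 0) :
    HasFDerivAt nIm ((nIm x)⁻¹ • ∑ i ∈ univ.erase 0, x i • proj (R := ℝ) i) x := by
  have hsq : HasFDerivAt (fun y : Fin (m + 1) → ℝ => ∑ i ∈ univ.erase 0, y i ^ 2)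
      (∑ i ∈ univ.erase 0, (2 * x i) • proj (R := ℝ) i) x :=
    HasFDerivAt.fun_sum fun i _ => by
      simpa using ((proj (R := ℝ) (φ := fun _ : Fin (m + 1) => ℝ) i).hasFDerivAt
        (x := x)).pow 2
  have hne : ∑ i ∈ univ.erase 0, x i ^ 2 ≠ 0 := fun h => hx (by simp [nIm, h])
  refine (hsq.sqrt hne).congr_fderiv ?_
  rw [smul_sum, smul_sum]
  refine sum_congr rfl fun i _ => ?_
  rw [smul_smul, smul_smul]
  congr 1
  field_simp
  rw [mul_comm, nIm]

lemma zeta_eq_add_smul_I : zeta x = (x 0 : ℂ) + nIm x • Complex.I := by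
  apply Complex.ext <;> simp [zeta]

lemma hasFDerivAt_zeta (hx : nIm x ≠ 0) :
    HasFDerivAt zeta (Complex.ofRealCLM.comp (proj (R := ℝ) 0) +
      ((nIm x)⁻¹ • ∑ i ∈ univ.erase 0, x i • proj (R := ℝ) i).smulRight
        Complex.I) x := by
  rw [show zeta = fun y : Fin (m + 1) → ℝ => (y 0 : ℂ) + nIm y • Complex.I from
    funext zeta_eq_add_smul_I]
  exact (Complex.ofRealCLM.comp (proj 0)).hasFDerivAt.add
    ((hasFDerivAt_nIm x hx).smul_const Complex.I)

lemma sum_erase_zero_proj_single (j : Fin (m + 1)) :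
    (∑ i ∈ univ.erase 0, x i • proj (R := ℝ) i) (Pi.single j 1) =
      if j = 0 then 0 else x j := by
  rcases eq_or_ne j 0 with rfl | hj <;> simp [Pi.single_apply, *]

lemma fderiv_zeta_single_zero (hx : nIm x ≠ 0) : fderiv ℝ zeta x (Pi.single 0 1) = 1 := by
  rw [(hasFDerivAt_zeta x hx).fderiv, add_apply,
    smulRight_apply, smul_apply,
    sum_erase_zero_proj_single]
  simp

lemma fderiv_zeta_single {j : Fin (m + 1)} (hj : j ≠ 0) (hx : nIm x ≠ 0) :
    fderiv ℝ zeta x (Pi.single j 1) = (x j / nIm x) • Complex.I := by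
  rw [(hasFDerivAt_zeta x hx).fderiv, add_apply,
    smulRight_apply, smul_apply,
    sum_erase_zero_proj_single]
  simp [hj, div_eq_inv_mul]

end Coordinates

section PartialDerivatives

variable {x : Fin (m + 1) → ℝ}

lemma pd_add {f g : (Fin (m + 1) → ℝ) → A} (hf : DifferentiableAt ℝ f x)
    (hg : DifferentiableAt ℝ g x) (i : Fin (m + 1)) :
    pd i (fun y => f y + g y) x = pd i f x + pd i g x := by
  simp only [pd, fderiv_fun_add hf hg, add_apply]

lemma pd_mul {f g : (Fin (m + 1) → ℝ) → A} (hf : DifferentiableAt ℝ f x)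
    (hg : DifferentiableAt ℝ g x) (i : Fin (m + 1)) :
    pd i (fun y => f y * g y) x = pd i f x * g x + f x * pd i g x := by
  simp only [pd, fderiv_fun_mul' hf hg, add_apply, smul_apply, smul_eq_mul, op_smul_eq_mul]
  exact add_comm _ _

lemma pd_zero_comp_zeta {G : ℂ → A} (hG : DifferentiableAt ℝ G (zeta x)) (hx : nIm x ≠ 0) :
    pd 0 (fun y => G (zeta y)) x = d1 G (zeta x) := by
  rw [pd, fderiv_fun_comp x hG (hasFDerivAt_zeta x hx).differentiableAt,
    comp_apply, fderiv_zeta_single_zero x hx, d1]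

lemma pd_comp_zeta {G : ℂ → A} (hG : DifferentiableAt ℝ G (zeta x)) (hx : nIm x ≠ 0)
    {j : Fin (m + 1)} (hj : j ≠ 0) :
    pd j (fun y => G (zeta y)) x = (x j / nIm x) • dI G (zeta x) := by
  rw [pd, fderiv_fun_comp x hG (hasFDerivAt_zeta x hx).differentiableAt,
    comp_apply, fderiv_zeta_single x hj hx, map_smul, dI]

variable (v : Fin (m + 1) → A)

lemma imv_eq_sum_smulRight :
    imv v = ⇑(∑ i ∈ univ.erase 0, (proj (R := ℝ) i).smulRight (v i)) := by
  ext y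
  simp [imv]

lemma differentiableAt_imv : DifferentiableAt ℝ (imv v) x := by
  rw [imv_eq_sum_smulRight]
  exact ContinuousLinearMap.differentiableAt _

lemma pd_imv (j : Fin (m + 1)) : pd j (imv v) x = if j = 0 then 0 else v j := by
  rw [pd, imv_eq_sum_smulRight, ContinuousLinearMap.fderiv]
  rcases eq_or_ne j 0 with rfl | hj <;> simp [Pi.single_apply, *]

end PartialDerivatives

lemma sum_smul_mul_self_of_anticomm {R ι : Type*} [Ring R] [Algebra ℝ R] (s : Finset ι)
    (e : ι → R) (c : ι → ℝ) (hsq : ∀ i ∈ s, e i * e i = -1)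
    (hanti : ∀ i ∈ s, ∀ j ∈ s, i ≠ j → e i * e j = -(e j * e i)) :
    (∑ i ∈ s, c i • e i) * (∑ i ∈ s, c i • e i) = -((∑ i ∈ s, c i ^ 2) • 1) := by
  classical
  have hpair : ∀ i ∈ s, ∀ j ∈ s,
      e i * e j + e j * e i = if i = j then (-2 : ℝ) • (1 : R) else 0 := by
    intro i hi j hj
    split_ifs with hij
    · subst hij; rw [hsq i hi]; module
    · rw [hanti i hi j hj hij, neg_add_cancel]
  refine smul_right_injective R (two_ne_zero (α := ℝ)) ?_
  calc (2 : ℝ) • ((∑ i ∈ s, c i • e i) * (∑ i ∈ s, c i • e i))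
      = ∑ i ∈ s, ∑ j ∈ s, (c i * c j) • (e i * e j + e j * e i) := by
        rw [two_smul, sum_mul_sum]
        nth_rewrite 2 [sum_comm]
        rw [← sum_add_distrib]
        refine sum_congr rfl fun i _ => ?_
        rw [← sum_add_distrib]
        refine sum_congr rfl fun j _ => ?_
        rw [smul_mul_smul, smul_mul_smul, smul_add, mul_comm (c j)]
    _ = ∑ i ∈ s, (c i * c i) • (-2 : ℝ) • (1 : R) := by
        refine sum_congr rfl fun i hi => ?_
        rw [sum_congr rfl fun j hj => by rw [hpair i hi j hj]]
        simp [smul_ite, hi]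
    _ = (2 : ℝ) • -((∑ i ∈ s, c i ^ 2) • 1) := by
        rw [sum_smul, smul_neg, smul_sum, ← sum_neg_distrib]
        refine sum_congr rfl fun i _ => ?_
        module

section CauchyRiemann

variable (v : Fin (m + 1) → A) {x : Fin (m + 1) → ℝ}

lemma imv_mul_self (hsq : ∀ i : Fin (m + 1), i ≠ 0 → v i * v i = -1)
    (hanti : ∀ i j : Fin (m + 1), i ≠ 0 → j ≠ 0 → i ≠ j → v i * v j = -(v j * v i)) :
    imv v x * imv v x = -(nIm x ^ 2 • 1) := by
  rw [imv, sum_smul_mul_self_of_anticomm _ _ _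
    (fun i hi => hsq i (ne_of_mem_erase hi))
    (fun i hi j hj => hanti i j (ne_of_mem_erase hi) (ne_of_mem_erase hj)), sq_nIm x]

lemma sum_mul_div_smul_eq_imv_mul (r : ℝ) (c : A) :
    ∑ j ∈ univ.erase 0, v j * ((x j / r) • c) = imv v x * (r⁻¹ • c) := by
  rw [imv, sum_mul]
  refine sum_congr rfl fun j _ => ?_
  simp only [smul_mul_assoc, mul_smul_comm, smul_smul, div_eq_mul_inv, mul_comm (x j)]

lemma dbar_add {f g : (Fin (m + 1) → ℝ) → A} (hf : DifferentiableAt ℝ f x)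
    (hg : DifferentiableAt ℝ g x) :
    dbar v (fun y => f y + g y) x = dbar v f x + dbar v g x := by
  simp only [dbar, pd_add hf hg, mul_add, sum_add_distrib, ← smul_add, add_add_add_comm]

lemma dbar_comp_zeta {G : ℂ → A} (hG : DifferentiableAt ℝ G (zeta x)) (hx : nIm x ≠ 0) :
    dbar v (fun y => G (zeta y)) x = (2 : ℝ)⁻¹ • sfun v (d1 G) (dI G) x := by
  rw [dbar, pd_zero_comp_zeta hG hx,
    sum_congr rfl fun j hj => by rw [pd_comp_zeta hG hx (ne_of_mem_erase hj)],
    sum_mul_div_smul_eq_imv_mul, sfun]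

lemma dbar_imv_mul_comp_zeta (hsq : ∀ i : Fin (m + 1), i ≠ 0 → v i * v i = -1)
    (hanti : ∀ i j : Fin (m + 1), i ≠ 0 → j ≠ 0 → i ≠ j → v i * v j = -(v j * v i))
    {G : ℂ → A} (hG : DifferentiableAt ℝ G (zeta x)) (hx : nIm x ≠ 0) :
    dbar v (fun y => imv v y * G (zeta y)) x = (2 : ℝ)⁻¹ •
      (imv v x * d1 G (zeta x) - (m : ℝ) • G (zeta x) - nIm x • dI G (zeta x)) := by
  have hGζ : DifferentiableAt ℝ (fun y => G (zeta y)) x :=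
    hG.comp x (hasFDerivAt_zeta x hx).differentiableAt
  have hpd : ∀ j ∈ univ.erase 0, v j * pd j (fun y => imv v y * G (zeta y)) x =
      -G (zeta x) + v j * ((x j / nIm x) • (imv v x * dI G (zeta x))) := by
    intro j hj
    have hj0 := ne_of_mem_erase hj
    rw [pd_mul (differentiableAt_imv v) hGζ, pd_imv, if_neg hj0, pd_comp_zeta hG hx hj0,
      mul_add, ← mul_assoc, hsq j hj0, neg_one_mul, mul_smul_comm]
  rw [dbar, sum_congr rfl hpd, sum_add_distrib, sum_mul_div_smul_eq_imv_mul,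
    pd_mul (differentiableAt_imv v) hGζ, pd_imv, if_pos rfl, pd_zero_comp_zeta hG hx,
    mul_smul_comm, ← mul_assoc, imv_mul_self v hsq hanti, sum_const, card_erase_of_mem
    (mem_univ _), card_univ, Fintype.card_fin, Nat.add_sub_cancel]
  rw [zero_mul, zero_add, neg_mul, smul_mul_assoc, one_mul, ← Nat.cast_smul_eq_nsmul ℝ]
  match_scalars <;> field_simp

end CauchyRiemann

section Stem

variable {z : ℂ} {F : ℂ → A}

def sderStem (F : ℂ → A) (z : ℂ) : A := z.im⁻¹ • F z

/- The two components of the stem function `2 ∂F/∂z̄ = (∂_α + i ∂_β)(F₁ + i F₂)`. -/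
def dbarStem₁ (F₁ F₂ : ℂ → A) (z : ℂ) : A := d1 F₁ z - dI F₂ z

def dbarStem₂ (F₁ F₂ : ℂ → A) (z : ℂ) : A := dI F₁ z + d1 F₂ z

lemma hasFDerivAt_sderStem (hz : z.im ≠ 0) (hF : DifferentiableAt ℝ F z) :
    HasFDerivAt (sderStem F) (z.im⁻¹ • fderiv ℝ F z +
      (-(z.im ^ 2)⁻¹ • Complex.imCLM).smulRight (F z)) z :=
  ((hasDerivAt_inv hz).comp_hasFDerivAt z Complex.imCLM.hasFDerivAt).smul hF.hasFDerivAt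

lemma d1_sderStem (hz : z.im ≠ 0) (hF : DifferentiableAt ℝ F z) :
    d1 (sderStem F) z = z.im⁻¹ • d1 F z := by
  simp [d1, (hasFDerivAt_sderStem hz hF).fderiv]

lemma dI_sderStem (hz : z.im ≠ 0) (hF : DifferentiableAt ℝ F z) :
    dI (sderStem F) z = z.im⁻¹ • dI F z - (z.im ^ 2)⁻¹ • F z := by
  simp [dI, (hasFDerivAt_sderStem hz hF).fderiv, sub_eq_add_neg]

end Stem

lemma dbar_sfun (v : Fin (m + 1) → A) (hsq : ∀ i : Fin (m + 1), i ≠ 0 → v i * v i = -1)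
    (hanti : ∀ i j : Fin (m + 1), i ≠ 0 → j ≠ 0 → i ≠ j → v i * v j = -(v j * v i))
    {F₁ F₂ : ℂ → A} {x : Fin (m + 1) → ℝ} (hF₁ : DifferentiableAt ℝ F₁ (zeta x))
    (hF₂ : DifferentiableAt ℝ F₂ (zeta x)) (hx : nIm x ≠ 0) :
    dbar v (sfun v F₁ F₂) x = (2 : ℝ)⁻¹ • sfun v (dbarStem₁ F₁ F₂) (dbarStem₂ F₁ F₂) x +
      (((1 : ℝ) - m) / 2) • sder F₂ x := by
  have hS : DifferentiableAt ℝ (sderStem F₂) (zeta x) :=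
    (hasFDerivAt_sderStem hx hF₂).differentiableAt
  have hζ := (hasFDerivAt_zeta x hx).differentiableAt
  rw [show sfun v F₁ F₂ = fun y => F₁ (zeta y) + imv v y * sderStem F₂ (zeta y) from rfl,
    dbar_add v (f := fun y => F₁ (zeta y)) (g := fun y => imv v y * sderStem F₂ (zeta y))
      (hF₁.comp x hζ) ((differentiableAt_imv v).mul (hS.comp x hζ)),
    dbar_comp_zeta v hF₁ hx, dbar_imv_mul_comp_zeta v hsq hanti hS hx,
    d1_sderStem hx hF₂, dI_sderStem hx hF₂]
  simp only [sfun, sder, sderStem, dbarStem₁, dbarStem₂, show (zeta x).im = nIm x from rfl]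
  simp only [mul_smul_comm, mul_add]
  match_scalars <;> field_simp
  ring

lemma eq_zero_of_mul_eq_mul_of_anticomm {R : Type*} [Ring R] [IsAddTorsionFree R] {a b c : R}
    (ha : a * a = -1) (hb : b * b = -1) (hab : a * b = -(b * a)) (h : a * c = b * c) :
    c = 0 := by
  refine self_eq_neg.mp ?_
  calc c = -((b * a) * c) := by rw [mul_assoc, h, ← mul_assoc, hb, neg_one_mul, neg_neg]
    _ = (a * b) * c := by rw [hab, neg_mul]
    _ = -c := by rw [mul_assoc, ← h, ← mul_assoc, ha, neg_one_mul]

lemma nIm_single_add_single {k : Fin (m + 1)} (hk : k ≠ 0) (a b : ℝ) :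
    nIm (Pi.single 0 a + Pi.single k b) = |b| := by
  rw [nIm, sum_eq_single_of_mem k (mem_erase.mpr ⟨hk, mem_univ k⟩)
    fun i hi hik => by simp [hik, ne_of_mem_erase hi]]
  simp [hk, Real.sqrt_sq_eq_abs]

lemma imv_single_add_single (v : Fin (m + 1) → A) {k : Fin (m + 1)} (hk : k ≠ 0) (a b : ℝ) :
    imv v (Pi.single 0 a + Pi.single k b) = b • v k := by
  rw [imv, sum_eq_single_of_mem k (mem_erase.mpr ⟨hk, mem_univ k⟩)
    fun i hi hik => by simp [hik, ne_of_mem_erase hi]]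
  simp [hk]

lemma sfun_single_add_single (v : Fin (m + 1) → A) (G₁ G₂ : ℂ → A) {k : Fin (m + 1)}
    (hk : k ≠ 0) {w : ℂ} (hw : 0 < w.im) :
    zeta (Pi.single 0 w.re + Pi.single k w.im) = w ∧
      sfun v G₁ G₂ (Pi.single 0 w.re + Pi.single k w.im) = G₁ w + v k * G₂ w := by
  have hβ : nIm (Pi.single 0 w.re + Pi.single k w.im) = w.im := by
    rw [nIm_single_add_single hk, abs_of_pos hw]
  have hζ : zeta (Pi.single 0 w.re + Pi.single k w.im) = w := by
    apply Complex.ext <;> simp [zeta, hβ, hk.symm]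
  refine ⟨hζ, ?_⟩
  rw [sfun, hζ, hβ, imv_single_add_single v hk, smul_mul_smul, mul_inv_cancel₀ hw.ne', one_smul]

lemma stem_eq_zero_of_sfun_eq_zero (hm : 2 ≤ m) (v : Fin (m + 1) → A)
    (hsq : ∀ i : Fin (m + 1), i ≠ 0 → v i * v i = -1)
    (hanti : ∀ i j : Fin (m + 1), i ≠ 0 → j ≠ 0 → i ≠ j → v i * v j = -(v j * v i))
    {G₁ G₂ : ℂ → A} {w : ℂ} (hw : 0 < w.im)
    (h : ∀ x, zeta x = w → sfun v G₁ G₂ x = 0) :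
    G₁ w = 0 ∧ G₂ w = 0 := by
  have hslice : ∀ k : Fin (m + 1), k ≠ 0 → G₁ w + v k * G₂ w = 0 := fun k hk => by
    obtain ⟨hζ, hf⟩ := sfun_single_add_single v G₁ G₂ hk hw
    rw [← hf, h _ hζ]
  have h1 : (⟨1, by omega⟩ : Fin (m + 1)) ≠ 0 := by simp [Fin.ext_iff]
  have h2 : (⟨2, by omega⟩ : Fin (m + 1)) ≠ 0 := by simp [Fin.ext_iff]
  have h12 : (⟨1, by omega⟩ : Fin (m + 1)) ≠ ⟨2, by omega⟩ := by simp [Fin.ext_iff]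
  have : IsAddTorsionFree A := .of_isTorsionFree ℝ A
  have hG₂ : G₂ w = 0 := eq_zero_of_mul_eq_mul_of_anticomm (hsq _ h1) (hsq _ h2)
    (hanti _ _ h1 h2 h12) (add_left_cancel ((hslice _ h1).trans (hslice _ h2).symm))
  refine ⟨?_, hG₂⟩
  simpa [hG₂] using hslice _ h1

section Symmetry

open ComplexConjugate Filter Topology

lemma d1_conj_and_dI_conj {G : ℂ → A} {w : ℂ} {ε : ℝ}
    (hsymm : ∀ᶠ u in 𝓝 w, G (conj u) = ε • G u) (hw : DifferentiableAt ℝ G w)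
    (hw' : DifferentiableAt ℝ G (conj w)) :
    d1 G (conj w) = ε • d1 G w ∧ dI G (conj w) = -(ε • dI G w) := by
  have hL : (fderiv ℝ G (conj w)).comp Complex.conjCLE.toContinuousLinearMap =
      ε • fderiv ℝ G w :=
    ((hw'.hasFDerivAt.comp w Complex.conjCLE.hasFDerivAt).congr_of_eventuallyEq
      (hsymm.mono fun u hu => hu.symm)).unique (hw.hasFDerivAt.const_smul ε)
  have h1 := congrArg (· 1) hL
  have hI := congrArg (· Complex.I) hL
  simp only [comp_apply, ContinuousLinearEquiv.coe_coe,
    Complex.conjCLE_apply, map_one, Complex.conj_I, map_neg, smul_apply] at h1 hI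
  exact ⟨h1, by rw [dI, dI, ← hI, neg_neg]⟩

lemma dbarStem_conj {F₁ F₂ : ℂ → A} {w : ℂ}
    (hs₁ : ∀ᶠ u in 𝓝 w, F₁ (conj u) = F₁ u) (hs₂ : ∀ᶠ u in 𝓝 w, F₂ (conj u) = -F₂ u)
    (hF₁ : DifferentiableAt ℝ F₁ w) (hF₁' : DifferentiableAt ℝ F₁ (conj w))
    (hF₂ : DifferentiableAt ℝ F₂ w) (hF₂' : DifferentiableAt ℝ F₂ (conj w)) :
    dbarStem₁ F₁ F₂ (conj w) = dbarStem₁ F₁ F₂ w ∧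
      dbarStem₂ F₁ F₂ (conj w) = -dbarStem₂ F₁ F₂ w := by
  obtain ⟨h₁1, h₁I⟩ := d1_conj_and_dI_conj (ε := 1)
    (hs₁.mono fun u hu => by rw [hu, one_smul]) hF₁ hF₁'
  obtain ⟨h₂1, h₂I⟩ := d1_conj_and_dI_conj (ε := -1)
    (hs₂.mono fun u hu => by rw [hu, neg_one_smul]) hF₂ hF₂'
  simp only [one_smul, neg_one_smul, neg_neg] at h₁1 h₁I h₂1 h₂I
  rw [dbarStem₁, dbarStem₂, dbarStem₁, dbarStem₂, h₁1, h₁I, h₂1, h₂I, neg_add]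
  exact ⟨rfl, rfl⟩

end Symmetry

lemma eq_zero_of_im_ne_zero {E : Type*} [TopologicalSpace E] [T2Space E] [Zero E]
    {g : ℂ → E} {D : Set ℂ} (hD : IsOpen D) (hg : ContinuousOn g D)
    (h : ∀ z ∈ D, z.im ≠ 0 → g z = 0) : ∀ z ∈ D, g z = 0 := by
  have hdense : Dense {z : ℂ | z.im ≠ 0} :=
    (dense_compl_singleton (0 : ℝ)).preimage Complex.isOpenMap_im
  exact Set.EqOn.of_subset_closure (fun z hz => h z hz.1 hz.2) hg continuousOn_const
    Set.inter_subset_left (hdense.open_subset_closure_inter hD)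

lemma continuousOn_dbarStem {F₁ F₂ : ℂ → A} {D : Set ℂ} (hD : IsOpen D)
    (hF₁ : ContDiffOn ℝ 1 F₁ D) (hF₂ : ContDiffOn ℝ 1 F₂ D) :
    ContinuousOn (dbarStem₁ F₁ F₂) D ∧ ContinuousOn (dbarStem₂ F₁ F₂) D := by
  have hc : ∀ F : ℂ → A, ContDiffOn ℝ 1 F D → ∀ c, ContinuousOn (fun z => fderiv ℝ F z c) D :=
    fun F hF c => (hF.continuousOn_fderiv_of_isOpen hD le_rfl).clm_apply continuousOn_const
  exact ⟨(hc _ hF₁ 1).sub (hc _ hF₂ Complex.I), (hc _ hF₁ Complex.I).add (hc _ hF₂ 1)⟩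

lemma dbarStem_eq_zero_of_upperHalfPlane {D : Set ℂ} (hD : IsOpen D)
    (hDsym : ∀ z ∈ D, (starRingEnd ℂ) z ∈ D) {F₁ F₂ : ℂ → A}
    (hs1 : ∀ z ∈ D, F₁ ((starRingEnd ℂ) z) = F₁ z)
    (hs2 : ∀ z ∈ D, F₂ ((starRingEnd ℂ) z) = -F₂ z)
    (hF1 : ContDiffOn ℝ 1 F₁ D) (hF2 : ContDiffOn ℝ 1 F₂ D)
    (h : ∀ z ∈ D, 0 < z.im → dbarStem₁ F₁ F₂ z = 0 ∧ dbarStem₂ F₁ F₂ z = 0) :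
    ∀ z ∈ D, dbarStem₁ F₁ F₂ z = 0 ∧ dbarStem₂ F₁ F₂ z = 0 := by
  have hd : ∀ F : ℂ → A, ContDiffOn ℝ 1 F D → ∀ z ∈ D, DifferentiableAt ℝ F z :=
    fun F hF z hz => (hF.contDiffAt (hD.mem_nhds hz)).differentiableAt_one
  have hoff : ∀ z ∈ D, z.im ≠ 0 → dbarStem₁ F₁ F₂ z = 0 ∧ dbarStem₂ F₁ F₂ z = 0 := by
    intro z hz him
    rcases him.lt_or_gt with hlt | hgt
    · set u := (starRingEnd ℂ) z
      have hu : u ∈ D := hDsym z hz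
      have hsymm := dbarStem_conj (Filter.eventually_of_mem (hD.mem_nhds hu) hs1)
        (Filter.eventually_of_mem (hD.mem_nhds hu) hs2) (hd _ hF1 u hu)
        (hd _ hF1 _ (hDsym u hu)) (hd _ hF2 u hu) (hd _ hF2 _ (hDsym u hu))
      obtain ⟨h₁, h₂⟩ := h u hu (by simpa [u] using hlt)
      rw [Complex.conj_conj] at hsymm
      rw [hsymm.1, hsymm.2, h₁, h₂, neg_zero]
      exact ⟨rfl, rfl⟩
    · exact h z hz hgt
  obtain ⟨hc₁, hc₂⟩ := continuousOn_dbarStem hD hF1 hF2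
  exact fun z hz => ⟨eq_zero_of_im_ne_zero hD hc₁ (fun w hw hw' => (hoff w hw hw').1) z hz,
    eq_zero_of_im_ne_zero hD hc₂ (fun w hw hw' => (hoff w hw hw').2) z hz⟩

theorem sliceRegular_iff_dbar_eq_sphericalDerivative_general
    (hm : 2 ≤ m)
    (v : Fin (m + 1) → A)
    (hsq : ∀ i : Fin (m + 1), i ≠ 0 → v i * v i = -1)
    (hanti : ∀ i j : Fin (m + 1), i ≠ 0 → j ≠ 0 → i ≠ j → v i * v j = -(v j * v i))
    (D : Set ℂ) (hD : IsOpen D) (hDsym : ∀ z ∈ D, (starRingEnd ℂ) z ∈ D)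
    (F₁ F₂ : ℂ → A)
    (hs1 : ∀ z ∈ D, F₁ ((starRingEnd ℂ) z) = F₁ z)
    (hs2 : ∀ z ∈ D, F₂ ((starRingEnd ℂ) z) = -F₂ z)
    (hF1 : ContDiffOn ℝ 1 F₁ D) (hF2 : ContDiffOn ℝ 1 F₂ D) :
    (∀ z ∈ D, d1 F₁ z = dI F₂ z ∧ dI F₁ z = -(d1 F₂ z)) ↔
      (∀ x : Fin (m + 1) → ℝ, zeta x ∈ D → nIm x ≠ 0 →
        dbar v (sfun v F₁ F₂) x = (((1 : ℝ) - m) / 2) • sder F₂ x) := by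
  have hd : ∀ F : ℂ → A, ContDiffOn ℝ 1 F D → ∀ z ∈ D, DifferentiableAt ℝ F z :=
    fun F hF z hz => (hF.contDiffAt (hD.mem_nhds hz)).differentiableAt_one
  have hdbar : ∀ x, zeta x ∈ D → nIm x ≠ 0 →
      (dbar v (sfun v F₁ F₂) x = (((1 : ℝ) - m) / 2) • sder F₂ x ↔
        sfun v (dbarStem₁ F₁ F₂) (dbarStem₂ F₁ F₂) x = 0) := fun x hx hβ => by
    rw [dbar_sfun v hsq hanti (hd _ hF1 _ hx) (hd _ hF2 _ hx) hβ, add_eq_right,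
      smul_eq_zero_iff_right (by norm_num)]
  have hCR : ∀ z, (d1 F₁ z = dI F₂ z ∧ dI F₁ z = -(d1 F₂ z)) ↔
      (dbarStem₁ F₁ F₂ z = 0 ∧ dbarStem₂ F₁ F₂ z = 0) := fun z => by
    rw [dbarStem₁, dbarStem₂, sub_eq_zero, add_eq_zero_iff_eq_neg]
  simp only [hCR]
  constructor
  · intro h x hx hβ
    rw [hdbar x hx hβ, sfun, (h _ hx).1, (h _ hx).2, smul_zero, mul_zero, add_zero]
  · refine fun h => dbarStem_eq_zero_of_upperHalfPlane hD hDsym hs1 hs2 hF1 hF2 fun w hw him =>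
      stem_eq_zero_of_sfun_eq_zero hm v hsq hanti him fun x hx => ?_
    subst hx
    exact (hdbar x hw him.ne').mp (h x hw him.ne')

/-- **Characterization of slice-regularity via the Cauchy–Riemann operator.**
Let `f` be a `C¹` slice function, induced by the stem components `(F₁, F₂)`
on the axially symmetric open subset `Ω = {x : ζ(x) ∈ D}` of a hypercomplex
subspace `M` of dimension `m+1` (associative case).  Then `f` is slice-regular
(i.e. the stem function `F₁ + √-1 F₂` is holomorphic) if and only if
`∂̄_B f = ((1-m)/2) f'ₛ` on `Ω \ ℝ`. -/
theorem sliceRegular_iff_dbar_eq_sphericalDerivative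
    (hm : 2 ≤ m)
    (v : Fin (m + 1) → A) (hv0 : v 0 = 1)
    (hsq : ∀ i : Fin (m + 1), i ≠ 0 → v i * v i = -1)
    (hanti : ∀ i j : Fin (m + 1), i ≠ 0 → j ≠ 0 → i ≠ j → v i * v j = -(v j * v i))
    (D : Set ℂ) (hD : IsOpen D) (hDsym : ∀ z ∈ D, (starRingEnd ℂ) z ∈ D)
    (F₁ F₂ : ℂ → A)
    (hs1 : ∀ z ∈ D, F₁ ((starRingEnd ℂ) z) = F₁ z)
    (hs2 : ∀ z ∈ D, F₂ ((starRingEnd ℂ) z) = -F₂ z)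
    (hF1 : ContDiffOn ℝ 1 F₁ D) (hF2 : ContDiffOn ℝ 1 F₂ D) :
    (∀ z ∈ D, d1 F₁ z = dI F₂ z ∧ dI F₁ z = -(d1 F₂ z)) ↔
      (∀ x : Fin (m + 1) → ℝ, zeta x ∈ D → nIm x ≠ 0 →
        dbar v (sfun v F₁ F₂) x = (((1 : ℝ) - m) / 2) • sder F₂ x) :=
  sliceRegular_iff_dbar_eq_sphericalDerivative_general hm v hsq hanti D hD hDsym F₁ F₂ hs1 hs2 hF1
    hF2

end PaperStmt
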